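/- arXiv:2401.13883 — 5 statements merged into one kernel-verified Lean document; each statement's English description precedes it below -/
import Mathlib

section
/- A finite and acyclic DyPDL model either has an optimal solution or is infeasible; in particular, the set of solutions is finite and each solution has finitely many transitions, so for minimization the minimum solution cost is attained. -/
/-- A DyPDL model (minimization): states, transitions with applicability
conditions (preconditions), successor (effects), cost expressions, base cases
(collapsed into a base-state predicate with a base-cost function giving the
minimum base-case cost), state constraints, and a target state. -/
structure DyPDL where
  State : Type
  Trans : Type
  /-- the transition is applicable in the state (preconditions hold) -/
  app : Trans → State → Prop
  /-- successor state `S⟦τ⟧` -/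
  succ : Trans → State → State
  /-- cost expression `cost_τ(x, S)` -/
  cost : Trans → ℚ → State → ℚ
  /-- the state satisfies some base case -/
  isBase : State → Prop
  /-- minimum base-case cost of a base state -/
  baseCost : State → ℚ
  /-- state constraints -/
  constr : State → Prop
  target : State

namespace DyPDL

variable (M : DyPDL)

/-- `IsSol S σ` : σ is an S-solution. -/
inductive IsSol : M.State → List M.Trans → Prop
  | base {S : M.State} : M.constr S → M.isBase S → IsSol S []
  | step {S : M.State} {τ : M.Trans} {σ : List M.Trans} :
      M.constr S → ¬ M.isBase S → M.app τ S →
      IsSol (M.succ τ S) σ → IsSol S (τ :: σ)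

/-- solution cost (minimization): recursively apply cost expressions, ending
with the base cost of the final state. -/
def solCost : List M.Trans → M.State → ℚ
  | [], S => M.baseCost S
  | τ :: σ, S => M.cost τ (solCost σ (M.succ τ S)) S

/-- `ReachBy S σ S'` : S' is reachable from S with the non-empty sequence σ:
all transitions applicable, intermediate states non-base and satisfying the
state constraints. -/
inductive ReachBy : M.State → List M.Trans → M.State → Prop
  | single {S : M.State} {τ : M.Trans} : M.app τ S → ReachBy S [τ] (M.succ τ S)
  | step {S S' : M.State} {τ : M.Trans} {σ : List M.Trans} :
      M.app τ S → ¬ M.isBase (M.succ τ S) → M.constr (M.succ τ S) →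
      ReachBy (M.succ τ S) σ S' → ReachBy S (τ :: σ) S'

/-- a state is reachable if it is the target or reachable from the target. -/
def Reachable (S : M.State) : Prop :=
  S = M.target ∨ ∃ σ, M.ReachBy M.target σ S

/-- `Dominates S' S` (written `S' ⪯ S`): S dominates S' (minimization). -/
def Dominates (S' S : M.State) : Prop :=
  ∀ σ', M.IsSol S' σ' → ∃ σ, M.IsSol S σ ∧
    M.solCost σ S ≤ M.solCost σ' S' ∧ σ.length ≤ σ'.length

/-- state reached after applying a sequence of transitions -/
def applySeq : List M.Trans → M.State → M.State
  | [], S => S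
  | τ :: σ, S => applySeq σ (M.succ τ S)

/-- the set of reachable states is finite -/
def FiniteModel : Prop := {S | M.Reachable S}.Finite

/-- no reachable state is reachable from itself -/
def Acyclic : Prop := ∀ S, M.Reachable S → ¬ ∃ σ, M.ReachBy S σ S

/-- Principle of Optimality -/
def PrincipleOfOptimality : Prop :=
  ∀ S, M.Reachable S → ∀ τ, M.app τ S → ∀ x y : ℚ, x ≤ y →
    M.cost τ x S ≤ M.cost τ y S

end DyPDL

/-- A monoidal structure for a DyPDL model: a monoid `⟨A, op, one⟩` with
`A ⊆ ℚ` such that every cost expression is `cost_τ(x, S) = w_τ(S) × x`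
with weights and base-case costs in `A`. -/
structure Monoidal (M : DyPDL) where
  A : Set ℚ
  op : ℚ → ℚ → ℚ
  one : ℚ
  one_mem : one ∈ A
  closure : ∀ x ∈ A, ∀ y ∈ A, op x y ∈ A
  assoc : ∀ x ∈ A, ∀ y ∈ A, ∀ z ∈ A, op x (op y z) = op (op x y) z
  one_op : ∀ x ∈ A, op one x = x
  op_one : ∀ x ∈ A, op x one = x
  w : M.Trans → M.State → ℚ
  w_mem : ∀ τ S, w τ S ∈ A
  cost_eq : ∀ τ x S, M.cost τ x S = op (w τ S) x
  base_mem : ∀ S, M.baseCost S ∈ A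

namespace Monoidal

variable {M : DyPDL} (Mo : Monoidal M)

/-- A is isotone -/
def Isotone : Prop :=
  ∀ x ∈ Mo.A, ∀ y ∈ Mo.A, ∀ z ∈ Mo.A,
    x ≤ y → (Mo.op x z ≤ Mo.op y z ∧ Mo.op z x ≤ Mo.op z y)

/-- cost algebra for minimization: isotone and the identity is minimal -/
def IsCostAlgebra : Prop :=
  Mo.Isotone ∧ ∀ x ∈ Mo.A, Mo.one ≤ x

/-- weight of a path -/
def pathW : List M.Trans → M.State → ℚ
  | [], _ => Mo.one
  | τ :: σ, S => Mo.op (Mo.w τ S) (pathW σ (M.succ τ S))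

end Monoidal

namespace DyPDL

variable (M : DyPDL)

theorem applySeq_append (a b : List M.Trans) (S : M.State) :
    M.applySeq (a ++ b) S = M.applySeq b (M.applySeq a S) := by
  induction a generalizing S with
  | nil => rfl
  | cons τ a ih => simp [applySeq, ih]

theorem sol_drop {S : M.State} {σ : List M.Trans} (h : M.IsSol S σ) :
    ∀ i, M.IsSol (M.applySeq (σ.take i) S) (σ.drop i) := by
  induction h with
  | base hc hb => intro i; simpa [applySeq] using IsSol.base hc hb
  | step hc hb ha hs ih =>
    intro i
    cases i with
    | zero => exact IsSol.step hc hb ha hs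
    | succ i => simpa [applySeq] using ih i

theorem reach_take {S : M.State} {σ : List M.Trans} (h : M.IsSol S σ) :
    ∀ k, k + 1 ≤ σ.length →
      M.ReachBy S (σ.take (k+1)) (M.applySeq (σ.take (k+1)) S) := by
  induction h with
  | base hc hb => intro k hk; simp at hk
  | step hc hb ha hs ih =>
    intro k hk
    cases k with
    | zero => simpa [applySeq] using ReachBy.single ha
    | succ k =>
      rename_i S τ σ
      have hk' : k + 1 ≤ σ.length := by simpa using hk
      have h2 := ih k hk'
      have hne : σ ≠ [] := by intro hnil; rw [hnil] at hk'; simp at hk'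
      obtain ⟨τ', σ', rfl⟩ := List.exists_cons_of_ne_nil hne
      cases hs with
      | step hc' hb' ha' hs' =>
        simpa [applySeq] using ReachBy.step ha hb' hc' h2

theorem states_ne {σ : List M.Trans} (h : M.IsSol M.target σ)
    (hacy : M.Acyclic) {i j : ℕ} (hij : i < j) (hj : j ≤ σ.length) :
    M.applySeq (σ.take i) M.target ≠ M.applySeq (σ.take j) M.target := by
  intro heq
  set Si := M.applySeq (σ.take i) M.target with hSi
  have hsol_i : M.IsSol Si (σ.drop i) := M.sol_drop h i
  have hlen : i < σ.length := lt_of_lt_of_le hij hj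
  have hne : σ.drop i ≠ [] := by
    intro hnil
    have := congrArg List.length hnil
    simp at this
    omega
  obtain ⟨τ, ρ, hρ⟩ := List.exists_cons_of_ne_nil hne
  have hnb : ¬ M.isBase Si := by
    rw [hρ] at hsol_i
    cases hsol_i; assumption
  by_cases hjlen : j = σ.length
  · have hbase : M.IsSol (M.applySeq (σ.take j) M.target) (σ.drop j) :=
      M.sol_drop h j
    rw [hjlen, List.drop_length] at hbase
    cases hbase with
    | base hc hb =>
      apply hnb
      rw [heq, hjlen]
      exact hb
  · have hjlt : j < σ.length := lt_of_le_of_ne hj hjlen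
    have hreach_i : M.Reachable Si := by
      rcases Nat.eq_zero_or_pos i with h0 | hpos
      · left; simp [hSi, h0, applySeq]
      · right
        obtain ⟨k, hk⟩ := Nat.exists_eq_add_of_lt hpos
        have hk2 : i = k + 1 := by omega
        rw [hSi, hk2]
        exact ⟨_, M.reach_take h k (by omega)⟩
    have hklen : (j - i - 1) + 1 ≤ (σ.drop i).length := by
      simp [List.length_drop]; omega
    have hseg := M.reach_take hsol_i (j - i - 1) hklen
    have hji : j - i - 1 + 1 = j - i := by omega
    rw [hji] at hseg
    have happ : M.applySeq ((σ.drop i).take (j-i)) Si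
        = M.applySeq (σ.take j) M.target := by
      rw [hSi, ← applySeq_append]
      congr 1
      rw [← List.take_add]
      congr 1
      omega
    refine hacy Si hreach_i ⟨(σ.drop i).take (j-i), ?_⟩
    rw [happ, ← heq] at hseg
    exact hseg

theorem length_bound {σ : List M.Trans} (h : M.IsSol M.target σ)
    (hfin : M.FiniteModel) (hacy : M.Acyclic) :
    σ.length + 1 ≤ hfin.toFinset.card := by
  have hmem : ∀ i : Fin (σ.length + 1),
      M.applySeq (σ.take (i : ℕ)) M.target ∈ hfin.toFinset := by
    intro i
    refine (Set.Finite.mem_toFinset hfin).mpr ?_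
    rcases Nat.eq_zero_or_pos (i : ℕ) with h0 | hpos
    · left; simp [h0, applySeq]
    · right
      obtain ⟨k, hk⟩ := Nat.exists_eq_add_of_lt hpos
      have hk2 : (i : ℕ) = k + 1 := by omega
      rw [hk2]
      exact ⟨_, M.reach_take h k (by omega)⟩
  have hinj : Set.InjOn (fun i : Fin (σ.length + 1) =>
      M.applySeq (σ.take (i : ℕ)) M.target) (Finset.univ : Finset (Fin (σ.length + 1))) := by
    intro a _ b _ hab
    by_contra hne
    rcases lt_or_gt_of_ne (fun hc => hne (Fin.ext hc) : (a : ℕ) ≠ (b : ℕ)) with hlt | hlt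
    · exact M.states_ne h hacy hlt (by omega) hab
    · exact M.states_ne h hacy hlt (by omega) hab.symm
  calc σ.length + 1 = (Finset.univ : Finset (Fin (σ.length + 1))).card := by simp
    _ ≤ hfin.toFinset.card :=
        Finset.card_le_card_of_injOn _ (fun i _ => hmem i) hinj

end DyPDL

/-- a finite and acyclic DyPDL model either has an optimal
solution or is infeasible; the set of solutions is finite (every solution,
being a list, has finitely many transitions), so the minimum cost is
attained. -/
theorem finite_acyclic_optimal_or_infeasible
    (M : DyPDL) [Finite M.Trans] (hfin : M.FiniteModel) (hacy : M.Acyclic) :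
    {σ : List M.Trans | M.IsSol M.target σ}.Finite ∧
    ((∃ σ, M.IsSol M.target σ) →
      ∃ σ, M.IsSol M.target σ ∧ ∀ σ', M.IsSol M.target σ' →
        M.solCost σ M.target ≤ M.solCost σ' M.target) := by
  have hsub : {σ : List M.Trans | M.IsSol M.target σ} ⊆
      {σ : List M.Trans | σ.length ≤ hfin.toFinset.card} := by
    intro σ hσ
    have := M.length_bound hσ hfin hacy
    simpa using by omega
  have hSfin : {σ : List M.Trans | M.IsSol M.target σ}.Finite :=
    (List.finite_length_le M.Trans hfin.toFinset.card).subset hsub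
  refine ⟨hSfin, fun hex => ?_⟩
  obtain ⟨σ, hσ, hmin⟩ := Set.exists_min_image _
    (fun σ => M.solCost σ M.target) hSfin hex
  exact ⟨σ, hσ, hmin⟩
end

section
/- Bellman equation for finite acyclic DyPDL models (minimization): for every reachable state S, either no S-solution exists, or an optimal S-solution with finitely many transitions exists; and the value function V, defined as the optimal S-solution cost (or ∞ if none exists), satisfies: V(S) = ∞ if S violates the state constraints; V(S) = min over base cases B satisfied by S of base_cost_B(S) if S satisfies some base case (and the state constraints); V(S) = min over applicable transitions τ of cost_τ(V(S⟦τ⟧), S) if S is a non-base state with some successor having V < ∞; and V(S) = ∞ otherwise. -/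
/-- `V` is the Bellman value function: `V S` is the cost of an optimal
S-solution, or `⊤` (∞) if no S-solution exists (minimization). -/
def IsValueFn (M : DyPDL) (V : M.State → WithTop ℚ) : Prop :=
  (∀ (S : M.State) (σ : List M.Trans), M.IsSol S σ →
    V S ≤ (M.solCost σ S : WithTop ℚ)) ∧
  (∀ S : M.State, V S ≠ ⊤ →
    ∃ σ, M.IsSol S σ ∧ V S = (M.solCost σ S : WithTop ℚ)) ∧
  (∀ S : M.State, (¬ ∃ σ, M.IsSol S σ) → V S = ⊤)

/-- Bellman equation for finite acyclic DyPDL models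
(minimization): every reachable state has an optimal solution (with finitely
many transitions) or none, and the value function V satisfies the four cases
of the Bellman equation. -/
theorem bellman_equation
    (M : DyPDL) (hfin : M.FiniteModel) (hacy : M.Acyclic)
    (hpo : M.PrincipleOfOptimality)
    (V : M.State → WithTop ℚ) (hV : IsValueFn M V) :
    ∀ S : M.State, M.Reachable S →
      -- optimal S-solution exists, or no S-solution exists
      ((∃ σ, M.IsSol S σ ∧ ∀ σ', M.IsSol S σ' →
          M.solCost σ S ≤ M.solCost σ' S) ∨ ¬ ∃ σ, M.IsSol S σ) ∧
      -- line 1: state constraints violated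
      (¬ M.constr S → V S = ⊤) ∧
      -- line 2: base state: minimum base-case cost
      (M.constr S → M.isBase S → V S = (M.baseCost S : WithTop ℚ)) ∧
      -- line 3: V S = min over applicable τ of cost_τ(V(S⟦τ⟧), S)
      (M.constr S → ¬ M.isBase S →
        (∃ τ, M.app τ S ∧ V (M.succ τ S) ≠ ⊤) →
        (∀ τ, M.app τ S → ∀ x : ℚ, V (M.succ τ S) = (x : WithTop ℚ) →
          V S ≤ (M.cost τ x S : WithTop ℚ)) ∧
        (∃ τ, ∃ x : ℚ, M.app τ S ∧ V (M.succ τ S) = (x : WithTop ℚ) ∧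
          V S = (M.cost τ x S : WithTop ℚ))) ∧
      -- line 4: otherwise
      (M.constr S → ¬ M.isBase S →
        (¬ ∃ τ, M.app τ S ∧ V (M.succ τ S) ≠ ⊤) → V S = ⊤) := by

  obtain ⟨hV1, hV2, hV3⟩ := hV
  intro S hS
  refine ⟨?_, ?_, ?_, ?_, ?_⟩
  · by_cases h : V S = ⊤
    · right
      rintro ⟨σ, hσ⟩
      have h1 := hV1 S σ hσ
      rw [h, top_le_iff] at h1
      exact WithTop.coe_ne_top h1
    · left
      obtain ⟨σ, hσ, hVS⟩ := hV2 S h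
      refine ⟨σ, hσ, fun σ' hσ' => ?_⟩
      have h1 := hV1 S σ' hσ'
      rw [hVS] at h1
      exact_mod_cast h1
  · intro hc
    apply hV3
    rintro ⟨σ, hσ⟩
    cases hσ <;> exact hc ‹_›
  · intro hc hb
    have hsol : M.IsSol S [] := DyPDL.IsSol.base hc hb
    have hle := hV1 S [] hsol
    have hne : V S ≠ ⊤ := ne_top_of_le_ne_top (WithTop.coe_ne_top) hle
    obtain ⟨σ, hσ, hVS⟩ := hV2 S hne
    cases hσ with
    | base _ _ =>
      rw [hVS]
      rfl
    | step _ hnb _ _ => exact absurd hb hnb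
  · intro hc hb ⟨τ₀, hτ₀, hne₀⟩
    have key : ∀ τ, M.app τ S → ∀ x : ℚ, V (M.succ τ S) = (x : WithTop ℚ) →
        V S ≤ (M.cost τ x S : WithTop ℚ) := by
      intro τ hτ x hx
      obtain ⟨σ', hσ', hVx⟩ := hV2 (M.succ τ S) (hx ▸ WithTop.coe_ne_top)
      have hxeq : x = M.solCost σ' (M.succ τ S) := by
        rw [hx] at hVx; exact_mod_cast hVx
      have hsol : M.IsSol S (τ :: σ') := DyPDL.IsSol.step hc hb hτ hσ'
      have := hV1 S (τ :: σ') hsol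
      simpa [DyPDL.solCost, ← hxeq] using this
    refine ⟨key, ?_⟩
    obtain ⟨x₀, hx₀⟩ := WithTop.ne_top_iff_exists.mp hne₀
    have hne : V S ≠ ⊤ := ne_top_of_le_ne_top WithTop.coe_ne_top (key τ₀ hτ₀ x₀ hx₀.symm)
    obtain ⟨σ, hσ, hVS⟩ := hV2 S hne
    cases hσ with
    | base _ hbb => exact absurd hbb hb
    | @step _ τ σ' _ hnb hτ hσ' =>
      have hsuccle := hV1 _ _ hσ'
      have hsne : V (M.succ τ S) ≠ ⊤ := ne_top_of_le_ne_top WithTop.coe_ne_top hsuccle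
      obtain ⟨x, hx⟩ := WithTop.ne_top_iff_exists.mp hsne
      refine ⟨τ, x, hτ, hx.symm, le_antisymm (key τ hτ x hx.symm) ?_⟩
      have hxle : x ≤ M.solCost σ' (M.succ τ S) := by
        rw [← hx] at hsuccle; exact_mod_cast hsuccle
      have := hpo S hS τ hτ x (M.solCost σ' (M.succ τ S)) hxle
      rw [hVS]
      exact WithTop.coe_le_coe.mpr this
  · intro hc hb hno
    apply hV3
    rintro ⟨σ, hσ⟩
    cases hσ with
    | base _ hbb => exact hb hbb
    | @step _ τ σ' _ _ hτ hσ' =>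
      exact hno ⟨τ, hτ, ne_top_of_le_ne_top WithTop.coe_ne_top (hV1 _ _ hσ')⟩
end

section
/- Forced transition identity for the value function: in a finite acyclic minimization DyPDL model satisfying the Principle of Optimality, if S is a reachable state with V(S) < ∞ and τ is a forced transition applicable in S, then V(S) = cost_τ(V(S⟦τ⟧), S). -/
/-- τ is a forced transition in S: applicable, and either no S-solution
exists, or every S-solution is matched by an S-solution starting with τ with
no greater cost and no more transitions. -/
def DyPDL.Forced (M : DyPDL) (S : M.State) (τ : M.Trans) : Prop :=
  M.app τ S ∧
    ((¬ ∃ σ, M.IsSol S σ) ∨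
      ∀ σ', M.IsSol S σ' → ∃ σ, M.IsSol S (τ :: σ) ∧
        M.solCost (τ :: σ) S ≤ M.solCost σ' S ∧
        (τ :: σ).length ≤ σ'.length)

/-- forced transition identity: if S is reachable with
V(S) < ∞ and τ is a forced transition applicable in S, then
V(S) = cost_τ(V(S⟦τ⟧), S) (in particular V(S⟦τ⟧) is finite). -/
theorem forced_transition_value
    (M : DyPDL) (hfin : M.FiniteModel) (hacy : M.Acyclic)
    (hpo : M.PrincipleOfOptimality)
    (V : M.State → WithTop ℚ) (hV : IsValueFn M V)
    (S : M.State) (hS : M.Reachable S) (hVS : V S ≠ ⊤)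
    (τ : M.Trans) (hf : M.Forced S τ) :
    ∃ x : ℚ, V (M.succ τ S) = (x : WithTop ℚ) ∧
      V S = (M.cost τ x S : WithTop ℚ) := by
  obtain ⟨hub, hopt, hnone⟩ := hV
  obtain ⟨σ', hσ', hVeq⟩ := hopt S hVS
  obtain ⟨happ, hforced⟩ := hf
  rcases hforced with h | h
  · exact absurd ⟨σ', hσ'⟩ h
  obtain ⟨σ, hsolτσ, hcostle, _⟩ := h σ' hσ'
  have hconstr : M.constr S := by cases hsolτσ; assumption
  have hnb : ¬ M.isBase S := by cases hsolτσ; assumption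
  have hsub : M.IsSol (M.succ τ S) σ := by cases hsolτσ; assumption
  have hVsuccne : V (M.succ τ S) ≠ ⊤ := by
    intro htop
    have := hub _ _ hsub
    rw [htop] at this
    exact WithTop.coe_ne_top (le_antisymm le_top this)
  obtain ⟨σ₀, hσ₀, hVsucc⟩ := hopt _ hVsuccne
  refine ⟨M.solCost σ₀ (M.succ τ S), hVsucc, ?_⟩
  have hxle : M.solCost σ₀ (M.succ τ S) ≤ M.solCost σ (M.succ τ S) := by
    have := hub _ _ hsub
    rw [hVsucc] at this
    exact_mod_cast this
  have h1 : V S ≤ (M.cost τ (M.solCost σ₀ (M.succ τ S)) S : WithTop ℚ) := by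
    have := hub S (τ :: σ₀) (DyPDL.IsSol.step hconstr hnb happ hσ₀)
    simpa [DyPDL.solCost] using this
  have h2 : M.cost τ (M.solCost σ₀ (M.succ τ S)) S ≤ M.solCost σ' S := by
    calc M.cost τ (M.solCost σ₀ (M.succ τ S)) S
        ≤ M.cost τ (M.solCost σ (M.succ τ S)) S := hpo S hS τ happ _ _ hxle
      _ = M.solCost (τ :: σ) S := rfl
      _ ≤ M.solCost σ' S := hcostle
  refine le_antisymm h1 ?_
  rw [hVeq]
  exact_mod_cast h2
end

section
/- Soundness of the generic heuristic-search solution update: whenever Algorithm 1 (heuristic search for a monoidal DyPDL model) updates its incumbent at a base state S with g(S) = w_{σ(S)}(S⁰), the recorded sequence σ(S) is a solution for the model and the recorded cost g(S) × min over base cases B satisfied by S of base_cost_B(S) equals solution_cost(σ(S)). -/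
/-- soundness of the solution update in the generic heuristic
search (Algorithm 1): if σ is a path from the target state S⁰ (non-base,
satisfying the state constraints) to a base state S satisfying the state
constraints, then σ is a solution for the model and its cost is
w_σ(S⁰) × (minimum base-case cost of S). -/
theorem heuristic_search_update_sound
    (M : DyPDL) (Mo : Monoidal M)
    (hc0 : M.constr M.target) (hnb0 : ¬ M.isBase M.target)
    (σ : List M.Trans) (S : M.State)
    (hr : M.ReachBy M.target σ S)
    (hSb : M.isBase S) (hSc : M.constr S) :
    M.IsSol M.target σ ∧
      M.solCost σ M.target = Mo.op (Mo.pathW σ M.target) (M.baseCost S) := by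
  have pathW_mem : ∀ (σ : List M.Trans) (S0 : M.State), Mo.pathW σ S0 ∈ Mo.A := by
    intro σ
    induction σ with
    | nil => intro S0; exact Mo.one_mem
    | cons τ σ ih =>
      intro S0
      exact Mo.closure _ (Mo.w_mem τ S0) _ (ih (M.succ τ S0))
  have key : ∀ (σ' : List M.Trans) (S0 S1 : M.State), M.ReachBy S0 σ' S1 →
      M.isBase S1 → M.constr S1 → M.constr S0 → ¬ M.isBase S0 →
      M.IsSol S0 σ' ∧ M.solCost σ' S0 = Mo.op (Mo.pathW σ' S0) (M.baseCost S1) := by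
    intro σ' S0 S1 h
    induction h with
    | @single S0 τ ha =>
      intro hb1 hc1 hc hnb
      refine ⟨DyPDL.IsSol.step hc hnb ha (DyPDL.IsSol.base hc1 hb1), ?_⟩
      simp only [DyPDL.solCost, Monoidal.pathW, Mo.cost_eq,
        Mo.op_one _ (Mo.w_mem τ S0)]
    | @step S0 S' τ σ ha hnb' hc' hr ih =>
      intro hb1 hc1 hc hnb
      obtain ⟨hsol, hcost⟩ := ih hb1 hc1 hc' hnb'
      refine ⟨DyPDL.IsSol.step hc hnb ha hsol, ?_⟩
      simp only [DyPDL.solCost, Monoidal.pathW, Mo.cost_eq, hcost]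
      exact Mo.assoc _ (Mo.w_mem τ S0) _ (pathW_mem σ _) _ (Mo.base_mem S')
  exact key σ M.target S hr hSb hSc hc0 hnb0
end

section
/- For the TSPTW dynamic programming model, the time-based dominance is a valid approximate dominance relation: if two states (U, i, t) and (U, i, t') over the same unvisited set U and location i satisfy t ≤ t', then for every (U, i, t')-solution there is a (U, i, t)-solution with cost no greater and the same number of transitions; consequently V(U, i, t) ≤ V(U, i, t'). -/
/-- A TSPTW instance with n+2 locations: the depot is location 0, with
nonnegative travel times c and time windows [a, b]. -/
structure TSPTW (n : ℕ) where
  c : Fin (n + 2) → Fin (n + 2) → ℚ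
  a : Fin (n + 2) → ℚ
  b : Fin (n + 2) → ℚ
  c_nonneg : ∀ i j, 0 ≤ c i j

namespace TSPTW

variable {n : ℕ}

/-- `Sol P U i t σ` : σ is a solution from state (U, i, t) in the TSPTW DP
model: it visits each customer of U exactly once, respecting deadlines (with
waiting until a_j upon earlier arrival), ending in the base case U = ∅. -/
inductive Sol (P : TSPTW n) :
    Finset (Fin (n + 2)) → Fin (n + 2) → ℚ → List (Fin (n + 2)) → Prop
  | nil {i t} : Sol P ∅ i t []
  | cons {U i t j σ} : j ∈ U → t + P.c i j ≤ P.b j →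
      Sol P (U.erase j) j (max (t + P.c i j) (P.a j)) σ →
      Sol P U i t (j :: σ)

/-- cost of a solution from current location i: the sum of the travel times
along the visits, plus the return to the depot 0 at the end. -/
def tourCost (P : TSPTW n) : Fin (n + 2) → List (Fin (n + 2)) → ℚ
  | i, [] => P.c i 0
  | i, j :: σ => P.c i j + tourCost P j σ

/-- `V` is the value function of the TSPTW DP model: `V U i t` is the minimum
cost of a (U, i, t)-solution, or ⊤ (∞) if none exists. -/
def IsValueFn (P : TSPTW n)
    (V : Finset (Fin (n + 2)) → Fin (n + 2) → ℚ → WithTop ℚ) : Prop :=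
  (∀ U i t σ, P.Sol U i t σ → V U i t ≤ (P.tourCost i σ : WithTop ℚ)) ∧
  (∀ U i t, V U i t ≠ ⊤ →
    ∃ σ, P.Sol U i t σ ∧ V U i t = (P.tourCost i σ : WithTop ℚ)) ∧
  (∀ U i t, (¬ ∃ σ, P.Sol U i t σ) → V U i t = ⊤)

end TSPTW


theorem TSPTW.Sol.mono {n : ℕ} {P : TSPTW n} {U i t' σ} (h : P.Sol U i t' σ) :
    ∀ t, t ≤ t' → P.Sol U i t σ := by
  induction h with
  | nil => intro t _; exact TSPTW.Sol.nil
  | cons hj hb _ ih =>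
    intro t ht
    refine TSPTW.Sol.cons hj (le_trans (by linarith) hb) (ih _ ?_)
    exact max_le_max (by linarith) le_rfl

/-- time-based dominance for TSPTW is a valid approximate
dominance: if t ≤ t', every (U, i, t')-solution is matched by a
(U, i, t)-solution with no greater cost and the same number of transitions;
consequently V(U, i, t) ≤ V(U, i, t'). -/
theorem tsptw_time_dominance {n : ℕ} (P : TSPTW n)
    (V : Finset (Fin (n + 2)) → Fin (n + 2) → ℚ → WithTop ℚ)
    (hV : TSPTW.IsValueFn P V)
    (U : Finset (Fin (n + 2))) (i : Fin (n + 2)) (t t' : ℚ) (ht : t ≤ t') :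
    (∀ σ, P.Sol U i t' σ → ∃ σ₂, P.Sol U i t σ₂ ∧
      P.tourCost i σ₂ ≤ P.tourCost i σ ∧ σ₂.length = σ.length) ∧
    V U i t ≤ V U i t' := by
  obtain ⟨h1, h2, h3⟩ := hV
  constructor
  · intro σ hσ
    exact ⟨σ, hσ.mono t ht, le_rfl, rfl⟩
  · by_cases hT : V U i t' = ⊤
    · simp [hT]
    · obtain ⟨σ, hσ, he⟩ := h2 U i t' hT
      rw [he]
      exact h1 U i t σ (hσ.mono t ht)
end
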